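/- arXiv:1708.05455 — 2 statements merged into one kernel-verified Lean document; each statement's English description precedes it below -/
import Mathlib

section
/- Let T be a tree with diametrical path v₀,...,v_d, and for each i let T_i be the subtree induced by vertices joined to v_i by paths internally disjoint from the path. If for some i ∈ {2,...,d−2}, T_i has an independent set of cardinality 3 that dominates T_i but does not contain v_i, then Γ_b(T) > diam(T). -/
namespace AJC

variable {V : Type*}

/-- Eccentricity of a vertex: max distance to any vertex. -/
noncomputable def ecc [Fintype V] (G : SimpleGraph V) (v : V) : ℕ :=
  Finset.univ.sup (fun u => G.dist v u)

/-- Diameter: max eccentricity. -/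
noncomputable def diam [Fintype V] (G : SimpleGraph V) : ℕ :=
  Finset.univ.sup (fun v => ecc G v)

/-- Radius: minimum eccentricity. -/
noncomputable def rad [Fintype V] (G : SimpleGraph V) : ℕ :=
  sInf (Set.range (ecc G))

/-- A broadcast on `G`. -/
def IsBroadcast [Fintype V] (G : SimpleGraph V) (f : V → ℕ) : Prop :=
  ∀ v, f v ≤ ecc G v

/-- `u` hears the broadcast `f` (is dominated by `f`). -/
def Hears (G : SimpleGraph V) (f : V → ℕ) (u : V) : Prop :=
  ∃ v, 1 ≤ f v ∧ G.dist v u ≤ f v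

/-- A dominating broadcast. -/
def IsDomBroadcast [Fintype V] (G : SimpleGraph V) (f : V → ℕ) : Prop :=
  IsBroadcast G f ∧ ∀ u, Hears G f u

/-- A minimal dominating broadcast: no strictly smaller broadcast is dominating. -/
def IsMinDomBroadcast [Fintype V] (G : SimpleGraph V) (f : V → ℕ) : Prop :=
  IsDomBroadcast G f ∧ ∀ f' : V → ℕ, f' < f → ¬ IsDomBroadcast G f'

/-- The cost of a broadcast. -/
def cost [Fintype V] (f : V → ℕ) : ℕ := ∑ v, f v

/-- The upper broadcast domination number `Γ_b`. -/
noncomputable def upperBroadcastNum [Fintype V] (G : SimpleGraph V) : ℕ :=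
  sSup {n | ∃ f : V → ℕ, IsMinDomBroadcast G f ∧ cost f = n}

/-- The broadcast domination number `γ_b`. -/
noncomputable def broadcastNum [Fintype V] (G : SimpleGraph V) : ℕ :=
  sInf {n | ∃ f : V → ℕ, IsDomBroadcast G f ∧ cost f = n}

/-- The `f`-neighbourhood of `v`. -/
def Nf (G : SimpleGraph V) (f : V → ℕ) (v : V) : Set V := {u | G.dist v u ≤ f v}

/-- The `f`-boundary of `v`. -/
def Bf (G : SimpleGraph V) (f : V → ℕ) (v : V) : Set V := {u | G.dist v u = f v}

/-- The `f`-private neighbourhood of `v`. -/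
def PN (G : SimpleGraph V) (f : V → ℕ) (v : V) : Set V :=
  {u | G.dist v u ≤ f v ∧ ∀ w, w ≠ v → 1 ≤ f w → ¬ G.dist w u ≤ f w}

/-- The `f`-private boundary of `v`: vertices in `N_f[v]` not dominated once the
broadcast at `v` is decreased by one. -/
def PB [DecidableEq V] (G : SimpleGraph V) (f : V → ℕ) (v : V) : Set V :=
  {u | G.dist v u ≤ f v ∧ ¬ Hears G (Function.update f v (f v - 1)) u}

/-- A dominating set of vertices. -/
def IsDomSet (G : SimpleGraph V) (S : Finset V) : Prop :=
  ∀ v, v ∈ S ∨ ∃ u ∈ S, G.Adj u v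

/-- A minimal dominating set. -/
def IsMinDomSet (G : SimpleGraph V) (S : Finset V) : Prop :=
  IsDomSet G S ∧ ∀ T ⊂ S, ¬ IsDomSet G T

/-- An independent set of vertices. -/
def IsIndepSet (G : SimpleGraph V) (S : Finset V) : Prop :=
  ∀ u ∈ S, ∀ w ∈ S, u ≠ w → ¬ G.Adj u w

/-- The upper domination number `Γ`. -/
noncomputable def upperDomNum [Fintype V] (G : SimpleGraph V) : ℕ :=
  sSup {n | ∃ S : Finset V, IsMinDomSet G S ∧ S.card = n}

/-- The domination number `γ`. -/
noncomputable def domNum [Fintype V] (G : SimpleGraph V) : ℕ :=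
  sInf {n | ∃ S : Finset V, IsDomSet G S ∧ S.card = n}

/-- The independence number `α`. -/
noncomputable def indepNum [Fintype V] (G : SimpleGraph V) : ℕ :=
  sSup {n | ∃ S : Finset V, IsIndepSet G S ∧ S.card = n}

/-- Given a diametrical path `v 0, …, v d` of a tree, `sideTree G d v i` is the set of
vertices connected to `v i` by a path internally disjoint from the diametrical path. -/
def sideTree (G : SimpleGraph V) (d : ℕ) (v : ℕ → V) (i : ℕ) : Set V :=
  {x | ∃ p : G.Walk x (v i), p.IsPath ∧ ∀ y ∈ p.support, y ≠ v i → ∀ j ≤ d, v j ≠ y}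

/-- The diameter of the subtree `T_i`. -/
noncomputable def sideDiam (G : SimpleGraph V) (d : ℕ) (v : ℕ → V) (i : ℕ) : ℕ :=
  sSup {n | ∃ x ∈ sideTree G d v i, ∃ y ∈ sideTree G d v i, G.dist x y = n}

/-- The eccentricity of a vertex `x` within the subtree `T_i`. -/
noncomputable def sideEcc (G : SimpleGraph V) (d : ℕ) (v : ℕ → V) (i : ℕ) (x : V) : ℕ :=
  sSup {n | ∃ y ∈ sideTree G d v i, G.dist x y = n}

/-- A leaf of `G`. -/
def IsLeaf [Fintype V] (G : SimpleGraph V) [DecidableRel G.Adj] (x : V) : Prop :=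
  G.degree x = 1

/-- A stem: a vertex adjacent to a leaf. -/
def IsStem [Fintype V] (G : SimpleGraph V) [DecidableRel G.Adj] (x : V) : Prop :=
  ∃ l, IsLeaf G l ∧ G.Adj x l

/-- A strong stem: a vertex adjacent to at least two leaves. -/
def IsStrongStem [Fintype V] (G : SimpleGraph V) [DecidableRel G.Adj] (x : V) : Prop :=
  ∃ l₁ l₂, l₁ ≠ l₂ ∧ IsLeaf G l₁ ∧ IsLeaf G l₂ ∧ G.Adj x l₁ ∧ G.Adj x l₂

/-!
Let `v 0` broadcast with strength `i`, `v d` with strength `d - i`, every vertex of `S` with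
strength `1`, and every vertex that hears none of these with strength `1`. In a dominating
broadcast `h` below this one, a vertex of `S` can only be heard from itself, and a spine vertex
`v m` with `m ≠ i` only from `v 0` or `v d`. The ends therefore cover the spine up to the single
gap at `v i`, so `h (v 0) + h (v d) ≥ d - 2` and `h` costs at least `d + 1`. A minimal such `h` is
a minimal dominating broadcast, whence `Γ_b(T) ≥ d + 1`.
-/

theorem _root_.SimpleGraph.IsAcyclic.dist_eq_length {G : SimpleGraph V} (hG : G.IsAcyclic)
    {x y : V} {p : G.Walk x y} (hp : p.IsPath) : G.dist x y = p.length := by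
  obtain ⟨q, hq, hql⟩ := SimpleGraph.Reachable.exists_path_of_dist ⟨p⟩
  have hpq : (⟨p, hp⟩ : G.Path x y) = ⟨q, hq⟩ := (hG.subsingleton_path x y).elim _ _
  rw [← hql, show p = q from congrArg Subtype.val hpq]

theorem _root_.SimpleGraph.IsAcyclic.dist_eq_length_add_length {G : SimpleGraph V}
    (hG : G.IsAcyclic) {x y c : V} {p : G.Walk x c} {q : G.Walk y c} (hp : p.IsPath)
    (hq : q.IsPath) (hpq : ∀ z ∈ p.support, z ∈ q.support → z = c) :
    G.dist x y = p.length + q.length := by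
  have hq' : q.reverse.IsPath := hq.reverse
  have : (p.append q.reverse).IsPath := by
    rw [SimpleGraph.Walk.isPath_def, SimpleGraph.Walk.support_append, List.nodup_append]
    refine ⟨hp.support_nodup, hq'.support_nodup.tail, fun z hzp z' hzq hzz' => ?_⟩
    subst hzz'
    have hzc : z = c := hpq z hzp (by simpa using List.mem_of_mem_tail hzq)
    subst hzc
    have hnodup := hq'.support_nodup
    rw [← SimpleGraph.Walk.cons_tail_support] at hnodup
    exact (List.nodup_cons.mp hnodup).1 hzq
  simpa using hG.dist_eq_length this

lemma dist_le_ecc [Fintype V] (G : SimpleGraph V) (x u : V) : G.dist x u ≤ ecc G x :=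
  Finset.le_sup (Finset.mem_univ u)

lemma one_le_ecc [Fintype V] [Nontrivial V] {G : SimpleGraph V} (hG : G.Connected) (x : V) :
    1 ≤ ecc G x := by
  obtain ⟨u, hu⟩ := exists_ne x
  exact (hG.preconnected x u).pos_dist_of_ne hu.symm |>.trans_le (dist_le_ecc G x u)

structure IsIndexedPath (G : SimpleGraph V) (d : ℕ) (v : ℕ → V) : Prop where
  adj : ∀ i < d, G.Adj (v i) (v (i + 1))
  inj : ∀ i ≤ d, ∀ j ≤ d, v i = v j → i = j

namespace IsIndexedPath

variable {G : SimpleGraph V} {d : ℕ} {v : ℕ → V}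

theorem exists_walk_support_eq (hP : IsIndexedPath G d v) (k : ℕ) :
    ∀ a, a + k ≤ d →
      ∃ w : G.Walk (v a) (v (a + k)), w.support = (List.range' a (k + 1)).map v := by
  induction k with
  | zero => exact fun a _ => ⟨.nil, rfl⟩
  | succ k ih =>
    intro a ha
    obtain ⟨w, hw⟩ := ih (a + 1) (by omega)
    refine ⟨(SimpleGraph.Walk.cons (hP.adj a (by omega)) w).copy rfl (congrArg v (by omega)),
      ?_⟩
    simp [hw, List.range'_succ]

theorem exists_isPath_length_eq (hP : IsIndexedPath G d v) {a b : ℕ} (hab : a ≤ b)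
    (hb : b ≤ d) :
    ∃ w : G.Walk (v a) (v b), w.IsPath ∧ w.length = b - a ∧
      ∀ y ∈ w.support, ∃ j ≤ d, v j = y := by
  obtain ⟨k, rfl⟩ := Nat.exists_eq_add_of_le hab
  obtain ⟨w, hw⟩ := hP.exists_walk_support_eq k a hb
  refine ⟨w, ?_, ?_, ?_⟩
  · rw [SimpleGraph.Walk.isPath_def, hw]
    refine List.Nodup.map_on (fun j hj k hk hjk => hP.inj j ?_ k ?_ hjk) List.nodup_range'
    all_goals simp only [List.mem_range'_1] at *; omega
  · have := congrArg List.length hw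
    simp only [SimpleGraph.Walk.length_support, List.length_map, List.length_range'] at this
    omega
  · intro y hy
    rw [hw, List.mem_map] at hy
    obtain ⟨j, hj, rfl⟩ := hy
    exact ⟨j, by simp only [List.mem_range'_1] at hj; omega, rfl⟩

theorem dist_eq (hP : IsIndexedPath G d v) (hG : G.IsAcyclic) {a b : ℕ} (ha : a ≤ d)
    (hb : b ≤ d) : G.dist (v a) (v b) = b - a + (a - b) := by
  rcases le_total a b with hab | hba
  · obtain ⟨w, hw, hlen, -⟩ := hP.exists_isPath_length_eq hab hb
    rw [hG.dist_eq_length hw, hlen]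
    omega
  · obtain ⟨w, hw, hlen, -⟩ := hP.exists_isPath_length_eq hba ha
    rw [SimpleGraph.dist_comm, hG.dist_eq_length hw, hlen]
    omega

theorem exists_isPath (hP : IsIndexedPath G d v) {a b : ℕ} (ha : a ≤ d) (hb : b ≤ d) :
    ∃ w : G.Walk (v a) (v b), w.IsPath ∧ ∀ y ∈ w.support, ∃ j ≤ d, v j = y := by
  rcases le_total a b with hab | hba
  · obtain ⟨w, hw, -, hsupp⟩ := hP.exists_isPath_length_eq hab hb
    exact ⟨w, hw, hsupp⟩
  · obtain ⟨w, hw, -, hsupp⟩ := hP.exists_isPath_length_eq hba ha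
    exact ⟨w.reverse, hw.reverse, fun y hy => hsupp y (by simpa using hy)⟩

theorem dist_eq_of_mem_sideTree (hP : IsIndexedPath G d v) (hG : G.IsAcyclic) {i m : ℕ}
    {x : V} (hi : i ≤ d) (hm : m ≤ d) (hx : x ∈ sideTree G d v i) :
    G.dist (v m) x = m - i + (i - m) + G.dist (v i) x := by
  obtain ⟨p, hp, hside⟩ := hx
  obtain ⟨w, hw, hspine⟩ := hP.exists_isPath hm hi
  have hmeet : ∀ z ∈ w.support, z ∈ p.support → z = v i := fun z hzw hzp => by
    by_contra hne
    obtain ⟨j, hj, rfl⟩ := hspine z hzw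
    exact hside _ hzp hne j hj rfl
  rw [hG.dist_eq_length_add_length hw hp hmeet, ← hG.dist_eq_length hw,
    ← hG.dist_eq_length hp, hP.dist_eq hG hm hi, SimpleGraph.dist_comm]
  omega

theorem last_ne_zero (hP : IsIndexedPath G d v) (hd : 0 < d) : v d ≠ v 0 :=
  fun h => hd.ne' (hP.inj d le_rfl 0 (Nat.zero_le d) h)

end IsIndexedPath

theorem ne_of_mem_sideTree {G : SimpleGraph V} {d : ℕ} {v : ℕ → V} {i j : ℕ} {x : V}
    (hx : x ∈ sideTree G d v i) (hxi : x ≠ v i) (hj : j ≤ d) : v j ≠ x := by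
  obtain ⟨p, -, hside⟩ := hx
  exact hside x p.start_mem_support hxi j hj

theorem mem_sideTree_of_adj {G : SimpleGraph V} {d : ℕ} {v : ℕ → V} {i : ℕ} {z : V}
    (hz : G.Adj z (v i)) (hoff : ∀ j ≤ d, v j ≠ z) : z ∈ sideTree G d v i := by
  refine ⟨.cons hz .nil, by simpa using hz.ne, fun y hy hyi j hj => ?_⟩
  obtain rfl : y = z := by simpa [hyi] using hy
  exact hoff j hj

section Broadcast

variable {G : SimpleGraph V} {f : V → ℕ} {u : V}

theorem hears_of_one_le (hu : 1 ≤ f u) : Hears G f u :=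
  ⟨u, hu, by simp⟩

theorem Hears.mono {g : V → ℕ} (hfg : f ≤ g) : Hears G f u → Hears G g u
  | ⟨w, hw, hdist⟩ => ⟨w, hw.trans (hfg w), hdist.trans (hfg w)⟩

open Classical in
noncomputable def fillUnheard (G : SimpleGraph V) (f : V → ℕ) (u : V) : ℕ :=
  if Hears G f u then f u else 1

theorem fillUnheard_of_hears (h : Hears G f u) : fillUnheard G f u = f u := if_pos h

theorem fillUnheard_of_not_hears (h : ¬ Hears G f u) : fillUnheard G f u = 1 := if_neg h

theorem fillUnheard_le_max : fillUnheard G f u ≤ max (f u) 1 := by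
  unfold fillUnheard
  split_ifs <;> omega

theorem le_fillUnheard : f ≤ fillUnheard G f := by
  intro u
  show f u ≤ fillUnheard G f u
  by_cases h : Hears G f u
  · rw [fillUnheard_of_hears h]
  · rw [fillUnheard_of_not_hears h]
    have : ¬ 1 ≤ f u := fun hu => h (hears_of_one_le hu)
    omega

theorem isDomBroadcast_fillUnheard [Fintype V] [Nontrivial V] (hG : G.Connected)
    (hf : IsBroadcast G f) : IsDomBroadcast G (fillUnheard G f) := by
  refine ⟨fun u => ?_, fun u => ?_⟩ <;> by_cases h : Hears G f u
  · rw [fillUnheard_of_hears h]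
    exact hf u
  · rw [fillUnheard_of_not_hears h]
    exact one_le_ecc hG u
  · exact h.mono le_fillUnheard
  · exact hears_of_one_le (fillUnheard_of_not_hears h).ge

theorem le_upperBroadcastNum [Fintype V] {g : V → ℕ} {n : ℕ} (hg : IsDomBroadcast G g)
    (hcost : ∀ h ≤ g, IsDomBroadcast G h → n ≤ cost h) : n ≤ upperBroadcastNum G := by
  obtain ⟨h, ⟨hhg, hh⟩, hmin⟩ := wellFounded_lt.has_min
    {h | h ≤ g ∧ IsDomBroadcast G h} ⟨g, le_rfl, hg⟩
  have hbdd : BddAbove {c | ∃ f : V → ℕ, IsMinDomBroadcast G f ∧ cost f = c} :=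
    ⟨∑ u, ecc G u, by rintro _ ⟨f, hf, rfl⟩; exact Finset.sum_le_sum fun u _ => hf.1.1 u⟩
  have hhmin : IsMinDomBroadcast G h :=
    ⟨hh, fun f hfh hf => hmin f ⟨hfh.le.trans hhg, hf⟩ hfh⟩
  exact (hcost h hhg hh).trans (le_csSup hbdd ⟨h, hhmin, rfl⟩)

end Broadcast

structure IsSideDomSet (G : SimpleGraph V) (d : ℕ) (v : ℕ → V) (i : ℕ) (S : Finset V) :
    Prop where
  indep : IsIndepSet G S
  subset : ↑S ⊆ sideTree G d v i
  not_mem : v i ∉ S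
  dom : ∀ x ∈ sideTree G d v i, x ∈ S ∨ ∃ s ∈ S, G.Adj s x

namespace IsSideDomSet

variable {G : SimpleGraph V} {d i : ℕ} {v : ℕ → V} {S : Finset V}

theorem not_mem_spine (hS : IsSideDomSet G d v i S) {j : ℕ} (hj : j ≤ d) : v j ∉ S :=
  fun h => ne_of_mem_sideTree (hS.subset h) (fun e => hS.not_mem (e ▸ h)) hj rfl

theorem lt_dist (hS : IsSideDomSet G d v i S) (hP : IsIndexedPath G d v) (hG : G.IsAcyclic)
    (hi : i ≤ d) {m : ℕ} (hm : m ≤ d) {x : V} (hx : x ∈ S) :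
    m - i + (i - m) < G.dist (v m) x := by
  obtain ⟨p, -⟩ := hS.subset hx
  have hpos : 0 < G.dist (v i) x :=
    SimpleGraph.Reachable.pos_dist_of_ne ⟨p.reverse⟩ fun e => hS.not_mem (e ▸ hx)
  rw [hP.dist_eq_of_mem_sideTree hG hi hm (hS.subset hx)]
  omega

theorem two_le_dist (hS : IsSideDomSet G d v i S) (hG : G.Connected) {x y : V} (hx : x ∈ S)
    (hy : y ∈ S) (hxy : x ≠ y) : 2 ≤ G.dist x y := by
  have h0 : G.dist x y ≠ 0 := fun h => hxy (hG.dist_eq_zero_iff.mp h)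
  have h1 : G.dist x y ≠ 1 := fun h =>
    hS.indep x hx y hy hxy (SimpleGraph.dist_eq_one_iff_adj.mp h)
  omega

end IsSideDomSet

theorem le_add_add_two_of_cover {d i a b : ℕ} (hcov : ∀ m ≤ d, m ≠ i → m ≤ a ∨ d - m ≤ b) :
    d ≤ a + b + 2 := by
  by_contra! hlt
  -- both `a + 1` and `a + 2` would have to be the uncovered index `i`
  have h1 := hcov (a + 1) (by omega)
  have h2 := hcov (a + 2) (by omega)
  omega

section SpineBroadcast

variable [DecidableEq V] {G : SimpleGraph V} {d i : ℕ} {v : ℕ → V} {S : Finset V}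

def spineBroadcast (v : ℕ → V) (d i : ℕ) (S : Finset V) (y : V) : ℕ :=
  if y = v 0 then i else if y = v d then d - i else if y ∈ S then 1 else 0

theorem spineBroadcast_zero : spineBroadcast v d i S (v 0) = i := by
  simp [spineBroadcast]

theorem spineBroadcast_last (hd : v d ≠ v 0) : spineBroadcast v d i S (v d) = d - i := by
  simp [spineBroadcast, hd]

theorem spineBroadcast_of_ne {y : V} (h0 : y ≠ v 0) (hd : y ≠ v d) :
    spineBroadcast v d i S y = if y ∈ S then 1 else 0 := by
  simp [spineBroadcast, h0, hd]

theorem IsSideDomSet.spineBroadcast_of_mem (hS : IsSideDomSet G d v i S) {y : V} (hy : y ∈ S) :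
    spineBroadcast v d i S y = 1 := by
  rw [spineBroadcast_of_ne (fun e : y = v 0 => hS.not_mem_spine (Nat.zero_le d) (e ▸ hy))
    (fun e : y = v d => hS.not_mem_spine le_rfl (e ▸ hy)), if_pos hy]

theorem IsSideDomSet.hears_spineBroadcast_of_dist_le_one (hT : G.IsTree)
    (hP : IsIndexedPath G d v) (hS : IsSideDomSet G d v i S) (hi : 1 ≤ i) (hid : i < d)
    {m : ℕ} {z : V} (hm : m ≤ d) (hz : G.dist (v m) z ≤ 1) :
    Hears G (spineBroadcast v d i S) z := by
  have hend : ∀ j ≤ d, G.dist (v j) z + j ≤ i ∨ G.dist (v j) z + (d - j) ≤ d - i →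
      Hears G (spineBroadcast v d i S) z := by
    rintro j hj (h | h)
    · have := hT.connected.dist_triangle (u := v 0) (v := v j) (w := z)
      rw [hP.dist_eq hT.isAcyclic (Nat.zero_le d) hj] at this
      exact ⟨v 0, by rw [spineBroadcast_zero]; omega, by rw [spineBroadcast_zero]; omega⟩
    · have := hT.connected.dist_triangle (u := v d) (v := v j) (w := z)
      rw [hP.dist_eq hT.isAcyclic le_rfl hj] at this
      have hlast := spineBroadcast_last (i := i) (S := S) (hP.last_ne_zero (by omega))
      exact ⟨v d, by rw [hlast]; omega, by rw [hlast]; omega⟩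
  by_cases hmi : m ≠ i ∨ G.dist (v m) z = 0
  · exact hend m hm (by omega)
  obtain ⟨rfl, hz1⟩ : m = i ∧ G.dist (v m) z = 1 := by omega
  have hadj : G.Adj (v m) z := SimpleGraph.dist_eq_one_iff_adj.mp hz1
  by_cases hspine : ∃ j ≤ d, v j = z
  · obtain ⟨j, hj, rfl⟩ := hspine
    have : j ≠ m := fun e => hadj.ne (congrArg v e.symm)
    exact hend j hj (by rw [SimpleGraph.dist_self]; omega)
  push Not at hspine
  rcases hS.dom z (mem_sideTree_of_adj hadj.symm hspine) with hzS | ⟨s, hs, hsz⟩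
  · exact hears_of_one_le (hS.spineBroadcast_of_mem hzS).ge
  · exact ⟨s, (hS.spineBroadcast_of_mem hs).ge, by
      rw [hS.spineBroadcast_of_mem hs, SimpleGraph.dist_eq_one_iff_adj.mpr hsz]⟩

theorem isBroadcast_spineBroadcast [Fintype V] [Nontrivial V] (hT : G.IsTree)
    (hP : IsIndexedPath G d v) (hid : i < d) : IsBroadcast G (spineBroadcast v d i S) := by
  have hd0 := hP.last_ne_zero (by omega)
  have hdist := hP.dist_eq hT.isAcyclic (Nat.zero_le d) le_rfl
  intro y
  by_cases h0 : y = v 0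
  · have := dist_le_ecc G (v 0) (v d)
    rw [h0, spineBroadcast_zero]
    omega
  by_cases hd : y = v d
  · have := dist_le_ecc G (v d) (v 0)
    rw [SimpleGraph.dist_comm] at this
    rw [hd, spineBroadcast_last hd0]
    omega
  rw [spineBroadcast_of_ne h0 hd]
  split_ifs
  · exact one_le_ecc hT.connected y
  · exact Nat.zero_le _

theorem fillUnheard_spineBroadcast_zero (hi : 1 ≤ i) :
    fillUnheard G (spineBroadcast v d i S) (v 0) = i := by
  rw [fillUnheard_of_hears (hears_of_one_le (by rwa [spineBroadcast_zero])), spineBroadcast_zero]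

theorem fillUnheard_spineBroadcast_last (hd0 : v d ≠ v 0) (hid : i < d) :
    fillUnheard G (spineBroadcast v d i S) (v d) = d - i := by
  rw [fillUnheard_of_hears (hears_of_one_le (by rw [spineBroadcast_last hd0]; omega)),
    spineBroadcast_last hd0]

theorem hears_cases_of_le_fillUnheard {h : V → ℕ}
    (hh : h ≤ fillUnheard G (spineBroadcast v d i S)) {u : V} (hu : Hears G h u) :
    G.dist (v 0) u ≤ h (v 0) ∨ G.dist (v d) u ≤ h (v d) ∨ ∃ z, 1 ≤ h z ∧ G.dist z u ≤ 1 ∧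
      (z ∈ S ∨ ¬ Hears G (spineBroadcast v d i S) z) := by
  obtain ⟨z, hz1, hzu⟩ := hu
  by_cases h0 : z = v 0
  · exact Or.inl (h0 ▸ hzu)
  by_cases hd : z = v d
  · exact Or.inr (Or.inl (hd ▸ hzu))
  have hf0 := spineBroadcast_of_ne (i := i) (S := S) h0 hd
  have hhz : h z ≤ fillUnheard G (spineBroadcast v d i S) z := hh z
  have hfz : spineBroadcast v d i S z ≤ 1 := by
    rw [hf0]
    split_ifs <;> omega
  refine Or.inr (Or.inr ⟨z, hz1, ?_, ?_⟩)
  · have := hhz.trans (fillUnheard_le_max.trans (max_le hfz le_rfl))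
    omega
  · by_cases hzS : z ∈ S
    · exact Or.inl hzS
    · refine Or.inr fun hz => ?_
      rw [fillUnheard_of_hears hz, hf0, if_neg hzS] at hhz
      omega

theorem IsSideDomSet.one_le_of_mem (hT : G.IsTree) (hP : IsIndexedPath G d v)
    (hS : IsSideDomSet G d v i S) (hi : 1 ≤ i) (hid : i < d) {h : V → ℕ}
    (hh : h ≤ fillUnheard G (spineBroadcast v d i S)) (hdom : ∀ u, Hears G h u) {x : V}
    (hx : x ∈ S) : 1 ≤ h x := by
  have h0 : h (v 0) ≤ i :=
    fillUnheard_spineBroadcast_zero (G := G) (d := d) (S := S) hi ▸ hh (v 0)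
  have hd : h (v d) ≤ d - i :=
    fillUnheard_spineBroadcast_last (G := G) (S := S) (hP.last_ne_zero (by omega)) hid ▸ hh (v d)
  have hx0 := hS.lt_dist hP hT.isAcyclic hid.le (Nat.zero_le d) hx
  have hxd := hS.lt_dist hP hT.isAcyclic hid.le le_rfl hx
  rcases hears_cases_of_le_fillUnheard hh (hdom x) with h1 | h1 | ⟨z, hz1, hzx, hz | hz⟩
  · omega
  · omega
  · by_cases hzx' : z = x
    · exact hzx' ▸ hz1
    · have := hS.two_le_dist hT.connected hz hx hzx'
      omega
  · refine absurd ⟨x, (hS.spineBroadcast_of_mem hx).ge, ?_⟩ hz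
    rwa [hS.spineBroadcast_of_mem hx, SimpleGraph.dist_comm]

theorem IsSideDomSet.le_or_sub_le_of_ne (hT : G.IsTree) (hP : IsIndexedPath G d v)
    (hS : IsSideDomSet G d v i S) (hi : 1 ≤ i) (hid : i < d) {h : V → ℕ}
    (hh : h ≤ fillUnheard G (spineBroadcast v d i S)) (hdom : ∀ u, Hears G h u) {m : ℕ}
    (hm : m ≤ d) (hmi : m ≠ i) :
    m ≤ h (v 0) ∨ d - m ≤ h (v d) := by
  rcases hears_cases_of_le_fillUnheard hh (hdom (v m)) with h1 | h1 | ⟨z, -, hzm, hz | hz⟩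
  · rw [hP.dist_eq hT.isAcyclic (Nat.zero_le d) hm] at h1
    omega
  · rw [hP.dist_eq hT.isAcyclic le_rfl hm] at h1
    omega
  · have := hS.lt_dist hP hT.isAcyclic hid.le hm hz
    rw [SimpleGraph.dist_comm] at hzm
    omega
  · rw [SimpleGraph.dist_comm] at hzm
    exact absurd (hS.hears_spineBroadcast_of_dist_le_one hT hP hi hid hm hzm) hz

theorem IsSideDomSet.succ_le_cost [Fintype V] (hT : G.IsTree) (hP : IsIndexedPath G d v)
    (hS : IsSideDomSet G d v i S) (hcard : S.card = 3) (hi : 1 ≤ i) (hid : i < d) {h : V → ℕ}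
    (hh : h ≤ fillUnheard G (spineBroadcast v d i S)) (hdom : IsDomBroadcast G h) :
    d + 1 ≤ cost h := by
  have hspine : d ≤ h (v 0) + h (v d) + 2 :=
    le_add_add_two_of_cover fun m hm hmi => hS.le_or_sub_le_of_ne hT hP hi hid hh hdom.2 hm hmi
  have hside : 3 ≤ ∑ x ∈ S, h x := calc
    3 = ∑ _x ∈ S, 1 := by simp [hcard]
    _ ≤ ∑ x ∈ S, h x :=
      Finset.sum_le_sum fun x hx => hS.one_le_of_mem hT hP hi hid hh hdom.2 hx
  have hsplit : h (v 0) + (h (v d) + ∑ x ∈ S, h x) ≤ cost h := by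
    have hd0 := hP.last_ne_zero (by omega)
    rw [← Finset.sum_insert (hS.not_mem_spine le_rfl), ← Finset.sum_insert (by
      simp [hd0.symm, hS.not_mem_spine (Nat.zero_le d)])]
    exact Finset.sum_le_sum_of_subset (Finset.subset_univ _)
  omega

end SpineBroadcast

theorem stmt8_general {V : Type*} [Fintype V] [DecidableEq V] (G : SimpleGraph V)
    (hT : G.IsTree) (d : ℕ) (v : ℕ → V)
    (hdiam : diam G = d)
    (hadj : ∀ i < d, G.Adj (v i) (v (i + 1)))
    (hinj : ∀ i ≤ d, ∀ j ≤ d, v i = v j → i = j)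
    (i : ℕ) (hi1 : 2 ≤ i) (hi2 : i ≤ d - 2)
    (S : Finset V) (hcard : S.card = 3) (hind : IsIndepSet G S)
    (hsub : ↑S ⊆ sideTree G d v i) (hvi : v i ∉ S)
    (hdom : ∀ x ∈ sideTree G d v i, x ∈ S ∨ ∃ s ∈ S, G.Adj s x) :
    diam G < upperBroadcastNum G := by
  have hP : IsIndexedPath G d v := ⟨hadj, hinj⟩
  have hS : IsSideDomSet G d v i S := ⟨hind, hsub, hvi, hdom⟩
  have : Nontrivial V := ⟨v d, v 0, hP.last_ne_zero (by omega)⟩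
  rw [hdiam]
  exact le_upperBroadcastNum
    (isDomBroadcast_fillUnheard hT.connected (isBroadcast_spineBroadcast hT hP (by omega)))
    fun h hh hhdom => hS.succ_le_cost hT hP hcard (by omega) (by omega) hh hhdom

/-- a dominating independent set of size 3 in some `T_i`, avoiding `v i`,
forces `Γ_b(T) > diam(T)`. -/
theorem stmt8 {V : Type*} [Fintype V] [DecidableEq V] (G : SimpleGraph V)
    [DecidableRel G.Adj] (hT : G.IsTree) (d : ℕ) (v : ℕ → V)
    (hdiam : diam G = d)
    (hadj : ∀ i < d, G.Adj (v i) (v (i + 1)))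
    (hinj : ∀ i ≤ d, ∀ j ≤ d, v i = v j → i = j)
    (i : ℕ) (hi1 : 2 ≤ i) (hi2 : i ≤ d - 2)
    (S : Finset V) (hcard : S.card = 3) (hind : IsIndepSet G S)
    (hsub : ↑S ⊆ sideTree G d v i) (hvi : v i ∉ S)
    (hdom : ∀ x ∈ sideTree G d v i, x ∈ S ∨ ∃ s ∈ S, G.Adj s x) :
    diam G < upperBroadcastNum G :=
  stmt8_general G hT d v hdiam hadj hinj i hi1 hi2 S hcard hind hsub hvi hdom

end AJC
end

section
/- For the star K_{1,n} with n ≥ 2, Γ_b(K_{1,n}) = n while diam(K_{1,n}) = 2; hence the ratio Γ_b(G)/diam(G) is unbounded over connected graphs. -/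
namespace AJC

variable {V : Type*}

abbrev K (n : ℕ) : SimpleGraph (Fin 1 ⊕ Fin n) := completeBipartiteGraph (Fin 1) (Fin n)

lemma adjK {n : ℕ} (a : Fin 1) (b : Fin n) : (K n).Adj (Sum.inl a) (Sum.inr b) := by
  simp [completeBipartiteGraph]

lemma dist_lr {n : ℕ} (a : Fin 1) (b : Fin n) : (K n).dist (Sum.inl a) (Sum.inr b) = 1 :=
  SimpleGraph.dist_eq_one_iff_adj.mpr (adjK a b)

lemma dist_rl {n : ℕ} (a : Fin 1) (b : Fin n) : (K n).dist (Sum.inr b) (Sum.inl a) = 1 :=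
  SimpleGraph.dist_eq_one_iff_adj.mpr (adjK a b).symm

lemma dist_rr {n : ℕ} {b c : Fin n} (h : b ≠ c) :
    (K n).dist (Sum.inr b) (Sum.inr c) = 2 := by
  have h2 : (K n).dist (Sum.inr b) (Sum.inr c) ≤ 2 := by
    simpa using SimpleGraph.dist_le ((adjK 0 b).symm.toWalk.append (adjK 0 c).toWalk)
  have h1 : (K n).dist (Sum.inr b) (Sum.inr c) ≠ 1 := by
    intro he
    have := SimpleGraph.dist_eq_one_iff_adj.mp he
    simp [completeBipartiteGraph] at this
  have h0 : (K n).dist (Sum.inr b) (Sum.inr c) ≠ 0 := by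
    intro he
    rcases SimpleGraph.dist_eq_zero_iff_eq_or_not_reachable.mp he with he' | hn
    · exact h (Sum.inr.inj he')
    · exact hn ⟨(adjK 0 b).symm.toWalk.append (adjK 0 c).toWalk⟩
  omega


lemma ecc_inl {n : ℕ} (hn : 1 ≤ n) (a : Fin 1) : ecc (K n) (Sum.inl a) = 1 := by
  have ha : a = 0 := Subsingleton.elim _ _
  subst ha
  apply le_antisymm
  · apply Finset.sup_le
    rintro (a' | b) _
    · have : a' = (0 : Fin 1) := Subsingleton.elim _ _
      simp [this, SimpleGraph.dist_self]
    · simp [dist_lr]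
  · calc (1:ℕ) = (K n).dist (Sum.inl 0) (Sum.inr ⟨0, hn⟩) := (dist_lr _ _).symm
      _ ≤ _ := Finset.le_sup (Finset.mem_univ _)

lemma other {n : ℕ} (hn : 2 ≤ n) (b : Fin n) : ∃ c : Fin n, c ≠ b := by
  have : Nontrivial (Fin n) := Fin.nontrivial_iff_two_le.mpr hn
  exact exists_ne b

lemma ecc_inr {n : ℕ} (hn : 2 ≤ n) (b : Fin n) : ecc (K n) (Sum.inr b) = 2 := by
  apply le_antisymm
  · apply Finset.sup_le
    rintro (a | c) _
    · simp [dist_rl]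
    · by_cases hc : b = c
      · simp [hc, SimpleGraph.dist_self]
      · simp [dist_rr hc]
  · obtain ⟨c, hc⟩ := other hn b
    calc (2:ℕ) = (K n).dist (Sum.inr b) (Sum.inr c) := (dist_rr (Ne.symm hc)).symm
      _ ≤ _ := Finset.le_sup (Finset.mem_univ _)

lemma diam_K {n : ℕ} (hn : 2 ≤ n) : diam (K n) = 2 := by
  apply le_antisymm
  · apply Finset.sup_le
    rintro (a | b) _
    · rw [ecc_inl (by omega) a]; omega
    · rw [ecc_inr hn b]
  · calc (2:ℕ) = ecc (K n) (Sum.inr ⟨0, by omega⟩) := (ecc_inr hn _).symm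
      _ ≤ _ := Finset.le_sup (Finset.mem_univ _)

lemma dist_from_center {n : ℕ} (u : Fin 1 ⊕ Fin n) : (K n).dist (Sum.inl 0) u ≤ 1 := by
  rcases u with a | b
  · have : a = (0 : Fin 1) := Subsingleton.elim _ _
    simp [this, SimpleGraph.dist_self]
  · simp [dist_lr]

lemma dist_from_leaf {n : ℕ} (b : Fin n) (u : Fin 1 ⊕ Fin n) :
    (K n).dist (Sum.inr b) u ≤ 2 := by
  rcases u with a | c
  · have : a = (0 : Fin 1) := Subsingleton.elim _ _
    simp [this, dist_rl]
  · by_cases hc : b = c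
    · simp [hc, SimpleGraph.dist_self]
    · simp [dist_rr hc]

lemma update_lt {n : ℕ} (f : Fin 1 ⊕ Fin n → ℕ) (v : Fin 1 ⊕ Fin n) (hv : 1 ≤ f v) :
    Function.update f v 0 < f := by
  rw [Pi.lt_def]
  refine ⟨fun x => ?_, v, by simp; omega⟩
  by_cases hx : x = v
  · subst hx; simp
  · simp [Function.update_of_ne hx]

lemma cost_le {n : ℕ} (hn : 2 ≤ n) (f : Fin 1 ⊕ Fin n → ℕ)
    (hf : IsMinDomBroadcast (K n) f) : cost f ≤ n := by
  obtain ⟨⟨hb, hd⟩, hmin⟩ := hf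
  by_cases h : 1 ≤ f (Sum.inl 0)
  · have hall : ∀ b : Fin n, f (Sum.inr b) = 0 := by
      intro b
      by_contra hb1
      have hb1 : 1 ≤ f (Sum.inr b) := by omega
      apply hmin (Function.update f (Sum.inr b) 0) (update_lt f _ hb1)
      refine ⟨fun v => le_trans (le_of_lt (update_lt f _ hb1) v) (hb v), fun u => ?_⟩
      exact ⟨Sum.inl 0, by simpa using h,
        le_trans (dist_from_center u) (by simpa using h)⟩
    have hc : f (Sum.inl 0) ≤ 1 := by
      have := hb (Sum.inl 0)
      rwa [ecc_inl (by omega) 0] at this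
    calc cost f = f (Sum.inl 0) := by
          simp [cost, Fintype.sum_sum_type, hall]
      _ ≤ 1 := hc
      _ ≤ n := by omega
  · have h0 : f (Sum.inl 0) = 0 := by omega
    by_cases h2 : ∃ b, f (Sum.inr b) = 2
    · obtain ⟨b, hb2⟩ := h2
      have hall : ∀ c : Fin n, c ≠ b → f (Sum.inr c) = 0 := by
        intro c hcb
        by_contra hc1
        have hc1 : 1 ≤ f (Sum.inr c) := by omega
        apply hmin (Function.update f (Sum.inr c) 0) (update_lt f _ hc1)
        refine ⟨fun v => le_trans (le_of_lt (update_lt f _ hc1) v) (hb v), fun u => ?_⟩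
        refine ⟨Sum.inr b, ?_, ?_⟩
        · rw [Function.update_of_ne (by simp [Ne.symm hcb])]
          omega
        · rw [Function.update_of_ne (by simp [Ne.symm hcb]), hb2]
          exact dist_from_leaf b u
      calc cost f = ∑ c : Fin n, f (Sum.inr c) := by
            have h0' : ∀ a : Fin 1, f (Sum.inl a) = 0 := by
              intro a; have : a = (0:Fin 1) := Subsingleton.elim _ _; simp [this, h0]
            simp [cost, Fintype.sum_sum_type, h0']
        _ = f (Sum.inr b) := Finset.sum_eq_single_of_mem b (Finset.mem_univ b)
            (fun c _ hcb => hall c hcb)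
        _ = 2 := hb2
        _ ≤ n := hn
    · push_neg at h2
      have hle1 : ∀ b : Fin n, f (Sum.inr b) ≤ 1 := by
        intro b
        have := hb (Sum.inr b)
        rw [ecc_inr hn b] at this
        have := h2 b
        omega
      have h0' : ∀ a : Fin 1, f (Sum.inl a) = 0 := by
        intro a; have : a = (0:Fin 1) := Subsingleton.elim _ _; simp [this, h0]
      calc cost f = ∑ c : Fin n, f (Sum.inr c) := by
            simp [cost, Fintype.sum_sum_type, h0']
        _ ≤ ∑ _c : Fin n, 1 := Finset.sum_le_sum (fun c _ => hle1 c)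
        _ = n := by simp

/-- The all-leaves broadcast. -/
def f0 (n : ℕ) : Fin 1 ⊕ Fin n → ℕ := Sum.elim (fun _ => 0) (fun _ => 1)

lemma f0_min {n : ℕ} (hn : 2 ≤ n) : IsMinDomBroadcast (K n) (f0 n) := by
  refine ⟨⟨?_, ?_⟩, ?_⟩
  · rintro (a | b)
    · simp [f0]
    · rw [ecc_inr hn b]; simp [f0]
  · rintro (a | b)
    · have ha : a = (0 : Fin 1) := Subsingleton.elim _ _
      exact ⟨Sum.inr ⟨0, by omega⟩, by simp [f0], by simp [f0, ha, dist_rl]⟩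
    · exact ⟨Sum.inr b, by simp [f0], by simp [f0, SimpleGraph.dist_self]⟩
  · intro f' hf' ⟨hb', hd'⟩
    rw [Pi.lt_def] at hf'
    obtain ⟨hle, i, hi⟩ := hf'
    rcases i with a | b0
    · simp [f0] at hi
    · have hb0 : f' (Sum.inr b0) = 0 := by simp [f0] at hi; omega
      obtain ⟨v, hv1, hvd⟩ := hd' (Sum.inr b0)
      rcases v with a | c
      · have := hle (Sum.inl a)
        simp [f0] at this
        omega
      · have hc1 : f' (Sum.inr c) ≤ 1 := by simpa [f0] using hle (Sum.inr c)
        by_cases hcb : c = b0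
        · subst hcb; omega
        · rw [dist_rr hcb] at hvd
          omega

lemma f0_cost {n : ℕ} : cost (f0 n) = n := by
  simp [cost, f0, Fintype.sum_sum_type]

lemma upperK {n : ℕ} (hn : 2 ≤ n) : upperBroadcastNum (K n) = n := by
  have hmem : n ∈ {m | ∃ f, IsMinDomBroadcast (K n) f ∧ cost f = m} :=
    ⟨f0 n, f0_min hn, f0_cost⟩
  apply le_antisymm
  · apply csSup_le ⟨n, hmem⟩
    rintro m ⟨f, hf, rfl⟩
    exact cost_le hn f hf
  · exact le_csSup ⟨n, fun m ⟨f, hf, hc⟩ => hc ▸ cost_le hn f hf⟩ hmem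


/-- `Γ_b(K_{1,n}) = n` and `diam(K_{1,n}) = 2` for `n ≥ 2`; hence the
ratio `Γ_b/diam` is unbounded. -/
theorem stmt15 :
    (∀ n : ℕ, 2 ≤ n →
      upperBroadcastNum (completeBipartiteGraph (Fin 1) (Fin n)) = n ∧
      diam (completeBipartiteGraph (Fin 1) (Fin n)) = 2) ∧
    (∀ C : ℕ, ∃ n : ℕ, 2 ≤ n ∧
      C * diam (completeBipartiteGraph (Fin 1) (Fin n)) <
        upperBroadcastNum (completeBipartiteGraph (Fin 1) (Fin n))) := by
  constructor
  · exact fun n hn => ⟨upperK hn, diam_K hn⟩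
  · intro C
    refine ⟨2 * C + 2, by omega, ?_⟩
    rw [upperK (by omega), diam_K (by omega)]
    omega

end AJC
end
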